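/- The pullback of the cone metric g_r = dr² + r²g under the embedding z ↦ (z, 0, 1) of C into C(H) is g_C = (1+y²)dx² - 2xy dx dy + (1+x²)dy², and the sectional curvature of this surface at the point z = x+iy equals -(3 + 2x² + 2y²)/(1 + x² + y²)². -/
import Mathlib

abbrev E4 : Type := ℝ × ℝ × ℝ × ℝ
def rc (p : E4) : ℝ := p.2.2.2
noncomputable def omt (p u : E4) : ℝ := (1 / 2) * (u.2.2.1 + 2 * p.1 * u.2.1 - 2 * p.2.1 * u.1)
noncomputable def gR (p u v : E4) : ℝ :=
  u.2.2.2 * v.2.2.2 + (rc p) ^ 2 * (u.1 * v.1 + u.2.1 * v.2.1 + omt p u * omt p v)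
def iotaC (x y : ℝ) : E4 := (x, y, 0, 1)
def Ec (p : ℝ × ℝ) : ℝ := 1 + p.2 ^ 2
def Fc (p : ℝ × ℝ) : ℝ := -(p.1 * p.2)
def Gc (p : ℝ × ℝ) : ℝ := 1 + p.1 ^ 2
noncomputable def px (f : ℝ × ℝ → ℝ) (p : ℝ × ℝ) : ℝ := fderiv ℝ f p (1, 0)
noncomputable def py (f : ℝ × ℝ → ℝ) (p : ℝ × ℝ) : ℝ := fderiv ℝ f p (0, 1)
noncomputable def brioschiK (p : ℝ × ℝ) : ℝ :=
  (Matrix.det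
      !![-(1 / 2) * py (py Ec) p + px (py Fc) p - (1 / 2) * px (px Gc) p,
          (1 / 2) * px Ec p, px Fc p - (1 / 2) * py Ec p;
        py Fc p - (1 / 2) * px Gc p, Ec p, Fc p;
        (1 / 2) * py Gc p, Fc p, Gc p] -
    Matrix.det
      !![0, (1 / 2) * py Ec p, (1 / 2) * px Gc p;
        (1 / 2) * py Ec p, Ec p, Fc p;
        (1 / 2) * px Gc p, Fc p, Gc p]) /
  (Ec p * Gc p - Fc p ^ 2) ^ 2

-- derivative lemmas
private lemma hEc (p : ℝ × ℝ) :
    HasFDerivAt Ec (p.2 • ContinuousLinearMap.snd ℝ ℝ ℝ + p.2 • ContinuousLinearMap.snd ℝ ℝ ℝ) p := by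
  have h : Ec = fun q : ℝ × ℝ => 1 + q.2 * q.2 := funext fun q => by simp [Ec, sq]
  rw [h]
  exact ((hasFDerivAt_snd (𝕜 := ℝ) (p := p)).mul hasFDerivAt_snd).const_add 1

private lemma hGc (p : ℝ × ℝ) :
    HasFDerivAt Gc (p.1 • ContinuousLinearMap.fst ℝ ℝ ℝ + p.1 • ContinuousLinearMap.fst ℝ ℝ ℝ) p := by
  have h : Gc = fun q : ℝ × ℝ => 1 + q.1 * q.1 := funext fun q => by simp [Gc, sq]
  rw [h]
  exact ((hasFDerivAt_fst (𝕜 := ℝ) (p := p)).mul hasFDerivAt_fst).const_add 1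

private lemma hFc (p : ℝ × ℝ) :
    HasFDerivAt Fc (-(p.1 • ContinuousLinearMap.snd ℝ ℝ ℝ + p.2 • ContinuousLinearMap.fst ℝ ℝ ℝ)) p := by
  exact ((hasFDerivAt_fst (𝕜 := ℝ) (p := p)).mul hasFDerivAt_snd).neg

private lemma pxEc : px Ec = fun _ => 0 := by
  funext p; unfold px; rw [(hEc p).fderiv]; simp
private lemma pyEc : py Ec = fun p => 2 * p.2 := by
  funext p; unfold py; rw [(hEc p).fderiv]; simp; ring
private lemma pxGc : px Gc = fun p => 2 * p.1 := by
  funext p; unfold px; rw [(hGc p).fderiv]; simp; ring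
private lemma pyGc : py Gc = fun _ => 0 := by
  funext p; unfold py; rw [(hGc p).fderiv]; simp
private lemma pxFc : px Fc = fun p => -p.2 := by
  funext p; unfold px; rw [(hFc p).fderiv]; simp
private lemma pyFc : py Fc = fun p => -p.1 := by
  funext p; unfold py; rw [(hFc p).fderiv]; simp

private lemma pyLin (p : ℝ × ℝ) : py (fun q : ℝ × ℝ => 2 * q.2) p = 2 := by
  unfold py
  have h : HasFDerivAt (fun q : ℝ × ℝ => 2 * q.2)
      ((2 : ℝ) • ContinuousLinearMap.snd ℝ ℝ ℝ) p :=
    (hasFDerivAt_snd (𝕜 := ℝ) (p := p)).const_mul 2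
  rw [h.fderiv]; simp

private lemma pxLin (p : ℝ × ℝ) : px (fun q : ℝ × ℝ => 2 * q.1) p = 2 := by
  unfold px
  have h : HasFDerivAt (fun q : ℝ × ℝ => 2 * q.1)
      ((2 : ℝ) • ContinuousLinearMap.fst ℝ ℝ ℝ) p :=
    (hasFDerivAt_fst (𝕜 := ℝ) (p := p)).const_mul 2
  rw [h.fderiv]; simp

private lemma pxNeg (p : ℝ × ℝ) : px (fun q : ℝ × ℝ => -q.1) p = -1 := by
  unfold px
  have h : HasFDerivAt (fun q : ℝ × ℝ => -q.1)
      (-(ContinuousLinearMap.fst ℝ ℝ ℝ)) p := (hasFDerivAt_fst (𝕜 := ℝ) (p := p)).neg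
  rw [h.fderiv]; simp

/-- The pullback of the cone metric under z ↦ (z,0,1) is
(1+y²)dx² - 2xy dx dy + (1+x²)dy², and its sectional curvature at z = x + iy is
-(3 + 2x² + 2y²)/(1 + x² + y²)². -/
theorem complex_plane_pullback_and_curvature :
    (∀ x y vx vy vx' vy' : ℝ,
      gR (iotaC x y) (vx, vy, 0, 0) (vx', vy', 0, 0) =
        (1 + y ^ 2) * (vx * vx') - x * y * (vx * vy' + vy * vx') +
          (1 + x ^ 2) * (vy * vy')) ∧
    (∀ x y : ℝ,
      brioschiK (x, y) = -(3 + 2 * x ^ 2 + 2 * y ^ 2) / (1 + x ^ 2 + y ^ 2) ^ 2) := by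
  constructor
  · intro x y vx vy vx' vy'
    simp only [gR, iotaC, omt, rc]
    ring
  · intro x y
    unfold brioschiK
    rw [Matrix.det_fin_three, Matrix.det_fin_three]
    simp [pxEc, pyEc, pxGc, pyGc, pxFc, pyFc, pyLin, pxLin, pxNeg, Ec, Fc, Gc]
    ring
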